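/- Perturbed range-finder bound (combining inequalities (5.2)–(5.4) in the paper). Let B ∈ ℝ^{m1×m2}, Ω ∈ ℝ^{m2×s}, E1 ∈ ℝ^{m1×s}, with SVD setup for B and k ≤ min(m1, m2), and assume rank(Ω_top) = k. Let Q ∈ ℝ^{m1×r} be any matrix with orthonormal columns whose column span equals the column span of B Ω + E1, and let T be any best rank-k approximation of Qᵀ B. Then ‖B − Q T‖_F ≤ ‖E1 Ω_top†‖_F + ( ‖Σ_bot‖_F² + ‖Σ_bot Ω_bot Ω_top†‖_F² )^{1/2}. -/

import Mathlib

open Matrix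

/-- Frobenius norm of a real matrix. -/
noncomputable def frob {m n : ℕ} (A : Matrix (Fin m) (Fin n) ℝ) : ℝ :=
  Real.sqrt (∑ i, ∑ j, (A i j) ^ 2)

/-- Moore–Penrose pseudoinverse of a full row rank matrix: `W† = Wᵀ (W Wᵀ)⁻¹`. -/
noncomputable def pinvR {k s : ℕ} (W : Matrix (Fin k) (Fin s) ℝ) :
    Matrix (Fin s) (Fin k) ℝ :=
  Wᵀ * (W * Wᵀ)⁻¹

/-- Column span of a matrix. -/
def colSpan {m n : ℕ} (A : Matrix (Fin m) (Fin n) ℝ) : Submodule ℝ (Fin m → ℝ) :=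
  LinearMap.range A.mulVecLin

/-- `T` is a best rank-`k` approximation (in Frobenius norm) of `X`. -/
def IsBestRankApprox {a b : ℕ} (k : ℕ) (X T : Matrix (Fin a) (Fin b) ℝ) : Prop :=
  T.rank ≤ k ∧ ∀ Z : Matrix (Fin a) (Fin b) ℝ, Z.rank ≤ k → frob (X - T) ≤ frob (X - Z)

/-- Embedding of the "bottom" indices `{k, …, m-1}` (as `Fin (m - k)`) into `Fin m`. -/
def botIdx {m k : ℕ} (hk : k ≤ m) (j : Fin (m - k)) : Fin m :=
  ⟨k + j.1, by have := j.isLt; omega⟩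

/-!
Put `Z = (B Ω + E₁) Ω_top† V_topᵀ`. It has rank at most `k` and lies in the range of `Q`, and
`B - Q M` splits orthogonally into `B - Q Qᵀ B` and `Q (Qᵀ B - M)`, so the optimality of `T` gives
`‖B - Q T‖_F ≤ ‖B - Z‖_F`. Since `Ω_top Ω_top† = 1`, the `V_top` part of `B = U Σ Vᵀ` cancels in
`B - Z`, leaving `U_bot Σ_bot (V_botᵀ - Ω_bot Ω_top† V_topᵀ) - E₁ Ω_top† V_topᵀ` (the bottom
columns of the diagonal `Σ` vanish outside its bottom rows). The triangle inequality splits off the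
`E₁` term, and as `V_top ⊥ V_bot` the first term has squared norm
`‖Σ_bot‖_F² + ‖Σ_bot Ω_bot Ω_top†‖_F²`.
-/

section Frobenius

variable {m n p : ℕ}

attribute [local instance] Matrix.frobeniusSeminormedAddCommGroup in
theorem frob_eq_norm (A : Matrix (Fin m) (Fin n) ℝ) : frob A = ‖A‖ := by
  simp only [frob, frobenius_norm_def, Real.norm_eq_abs, Real.rpow_two, sq_abs, Real.sqrt_eq_rpow]

theorem frob_nonneg (A : Matrix (Fin m) (Fin n) ℝ) : 0 ≤ frob A :=
  Real.sqrt_nonneg _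

attribute [local instance] Matrix.frobeniusSeminormedAddCommGroup in
theorem frob_sub_le (A B : Matrix (Fin m) (Fin n) ℝ) : frob (A - B) ≤ frob A + frob B := by
  simpa only [frob_eq_norm] using norm_sub_le A B

attribute [local instance] Matrix.frobeniusSeminormedAddCommGroup in
theorem frob_transpose (A : Matrix (Fin m) (Fin n) ℝ) : frob Aᵀ = frob A := by
  simpa only [frob_eq_norm] using frobenius_norm_transpose A

theorem frob_neg (A : Matrix (Fin m) (Fin n) ℝ) : frob (-A) = frob A := by
  simp [frob]

theorem sum_sum_sq_eq_trace (A : Matrix (Fin m) (Fin n) ℝ) :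
    ∑ i, ∑ j, A i j ^ 2 = (Aᵀ * A).trace := by
  simp only [trace, diag, mul_apply, transpose_apply, sq]
  exact Finset.sum_comm

theorem frob_eq_sqrt_trace (A : Matrix (Fin m) (Fin n) ℝ) : frob A = √(Aᵀ * A).trace := by
  rw [frob, sum_sum_sq_eq_trace]

theorem frob_sq (A : Matrix (Fin m) (Fin n) ℝ) : frob A ^ 2 = (Aᵀ * A).trace := by
  rw [frob, Real.sq_sqrt (by positivity), sum_sum_sq_eq_trace]

theorem frob_mul_of_transpose_mul_self {Q : Matrix (Fin m) (Fin n) ℝ} (hQ : Qᵀ * Q = 1)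
    (M : Matrix (Fin n) (Fin p) ℝ) : frob (Q * M) = frob M := by
  rw [frob_eq_sqrt_trace, frob_eq_sqrt_trace, transpose_mul, Matrix.mul_assoc,
    ← Matrix.mul_assoc Qᵀ, hQ, Matrix.one_mul]

theorem frob_mul_transpose_of_transpose_mul_self {A : Matrix (Fin n) (Fin p) ℝ}
    (hA : Aᵀ * A = 1) (M : Matrix (Fin m) (Fin p) ℝ) : frob (M * Aᵀ) = frob M := by
  rw [← frob_transpose, transpose_mul, transpose_transpose, frob_mul_of_transpose_mul_self hA,
    frob_transpose]

theorem frob_add_sq_of_trace_eq_zero {X Y : Matrix (Fin m) (Fin n) ℝ}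
    (h : (Xᵀ * Y).trace = 0) : frob (X + Y) ^ 2 = frob X ^ 2 + frob Y ^ 2 := by
  have h' : (Yᵀ * X).trace = 0 := by
    rw [← trace_transpose, transpose_mul, transpose_transpose, h]
  simp only [frob_sq, transpose_add, Matrix.add_mul, Matrix.mul_add, trace_add, h, h']
  ring

end Frobenius

section Projection

variable {m n r k : ℕ} {Q : Matrix (Fin m) (Fin r) ℝ}

theorem frob_sub_mul_sq (hQ : Qᵀ * Q = 1) (B : Matrix (Fin m) (Fin n) ℝ)
    (M : Matrix (Fin r) (Fin n) ℝ) :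
    frob (B - Q * M) ^ 2 = frob (B - Q * (Qᵀ * B)) ^ 2 + frob (Qᵀ * B - M) ^ 2 := by
  have hperp : (B - Q * (Qᵀ * B))ᵀ * Q = 0 := by
    rw [transpose_sub, Matrix.sub_mul, transpose_mul, Matrix.mul_assoc, hQ, Matrix.mul_one,
      transpose_mul, transpose_transpose, sub_self]
  have hsplit : B - Q * M = (B - Q * (Qᵀ * B)) + Q * (Qᵀ * B - M) := by
    rw [Matrix.mul_sub]; abel
  rw [hsplit, frob_add_sq_of_trace_eq_zero, frob_mul_of_transpose_mul_self hQ]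
  rw [← Matrix.mul_assoc, hperp, Matrix.zero_mul, trace_zero]

theorem IsBestRankApprox.frob_sub_mul_le (hQ : Qᵀ * Q = 1) {B : Matrix (Fin m) (Fin n) ℝ}
    {T W : Matrix (Fin r) (Fin n) ℝ} (hT : IsBestRankApprox k (Qᵀ * B) T) (hW : W.rank ≤ k) :
    frob (B - Q * T) ≤ frob (B - Q * W) := by
  have hTW := pow_le_pow_left₀ (frob_nonneg _) (hT.2 W hW) 2
  rw [← pow_le_pow_iff_left₀ (frob_nonneg _) (frob_nonneg _) two_ne_zero,
    frob_sub_mul_sq hQ B T, frob_sub_mul_sq hQ B W]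
  linarith

theorem colSpan_mul_le (A : Matrix (Fin m) (Fin n) ℝ) (C : Matrix (Fin n) (Fin r) ℝ) :
    colSpan (A * C) ≤ colSpan A := by
  rintro _ ⟨x, rfl⟩
  exact ⟨C *ᵥ x, by simp [mulVec_mulVec]⟩

theorem mul_transpose_mul_of_colSpan_le (hQ : Qᵀ * Q = 1) {Z : Matrix (Fin m) (Fin n) ℝ}
    (hZ : colSpan Z ≤ colSpan Q) : Q * (Qᵀ * Z) = Z := by
  refine ext_iff_mulVec.mpr fun v => ?_
  obtain ⟨x, hx⟩ := hZ ⟨v, rfl⟩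
  simp only [mulVecLin_apply] at hx
  rw [← mulVec_mulVec, ← mulVec_mulVec, ← hx, mulVec_mulVec _ Qᵀ, hQ, one_mulVec]

end Projection

theorem mul_pinvR_of_rank_eq {k s : ℕ} {W : Matrix (Fin k) (Fin s) ℝ} (hW : W.rank = k) :
    W * pinvR W = 1 := by
  have hsurj : Function.Surjective (W * Wᵀ).mulVec := by
    refine (LinearMap.range_eq_top (f := (W * Wᵀ).mulVecLin)).mp
      (Submodule.eq_top_of_finrank_eq ?_)
    rw [← rank, rank_self_mul_transpose, hW, Module.finrank_fin_fun]
  rw [pinvR, ← Matrix.mul_assoc,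
    mul_nonsing_inv _ ((isUnit_iff_isUnit_det _).mp (mulVec_surjective_iff_isUnit.mp hsurj))]

theorem frob_mul_transpose_sub_mul_transpose_sq {m n p q : ℕ} {V₁ : Matrix (Fin n) (Fin p) ℝ}
    {V₂ : Matrix (Fin n) (Fin q) ℝ} (h₁ : V₁ᵀ * V₁ = 1) (h₂ : V₂ᵀ * V₂ = 1) (h₁₂ : V₁ᵀ * V₂ = 0)
    (X : Matrix (Fin m) (Fin q) ℝ) (Y : Matrix (Fin m) (Fin p) ℝ) :
    frob (X * V₂ᵀ - Y * V₁ᵀ) ^ 2 = frob X ^ 2 + frob Y ^ 2 := by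
  have hperp : ((X * V₂ᵀ)ᵀ * -(Y * V₁ᵀ)).trace = 0 := by
    rw [Matrix.mul_neg, trace_neg, transpose_mul, transpose_transpose, Matrix.mul_assoc,
      trace_mul_comm, Matrix.mul_assoc, Matrix.mul_assoc, h₁₂, Matrix.mul_zero, Matrix.mul_zero,
      trace_zero, neg_zero]
  rw [sub_eq_add_neg, frob_add_sq_of_trace_eq_zero hperp, frob_neg,
    frob_mul_transpose_of_transpose_mul_self h₂, frob_mul_transpose_of_transpose_mul_self h₁]

theorem submatrix_transpose_mul_submatrix {l n a b R : Type*} [Fintype l] [Mul R]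
    [AddCommMonoid R] (V : Matrix l n R) (f : a → n) (g : b → n) :
    (V.submatrix id f)ᵀ * V.submatrix id g = (Vᵀ * V).submatrix f g := by
  ext i j
  simp [mul_apply]

section Blocks

variable {m k : ℕ} (hk : k ≤ m)

theorem botIdx_injective : Function.Injective (botIdx hk) := fun i j h =>
  Fin.ext (by simpa [botIdx] using congrArg Fin.val h)

theorem castLE_ne_botIdx (i : Fin k) (j : Fin (m - k)) : Fin.castLE hk i ≠ botIdx hk j := by
  intro h
  have := congrArg Fin.val h
  simp only [Fin.val_castLE, botIdx] at this
  omega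

theorem sum_univ_eq_sum_castLE_add_sum_botIdx {M : Type*} [AddCommMonoid M] (f : Fin m → M) :
    ∑ i, f i = ∑ i : Fin k, f (Fin.castLE hk i) + ∑ j : Fin (m - k), f (botIdx hk j) := by
  let e : Fin k ⊕ Fin (m - k) ≃ Fin m := finSumFinEquiv.trans (finCongr (by omega))
  rw [← e.sum_comp, Fintype.sum_sum_type]
  rfl

theorem mul_eq_castLE_add_botIdx {a b R : Type*} [NonUnitalNonAssocSemiring R]
    (M : Matrix a (Fin m) R) (N : Matrix (Fin m) b R) :
    M * N = M.submatrix id (Fin.castLE hk) * N.submatrix (Fin.castLE hk) id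
      + M.submatrix id (botIdx hk) * N.submatrix (botIdx hk) id := by
  ext i j
  exact sum_univ_eq_sum_castLE_add_sum_botIdx hk _

variable {l R : Type*} [Fintype l] [Semiring R] {V : Matrix l (Fin m) R}

theorem castLE_transpose_mul_castLE (hV : Vᵀ * V = 1) :
    (V.submatrix id (Fin.castLE hk))ᵀ * V.submatrix id (Fin.castLE hk) = 1 := by
  rw [submatrix_transpose_mul_submatrix, hV, submatrix_one _ (Fin.castLE_injective hk)]

theorem botIdx_transpose_mul_botIdx (hV : Vᵀ * V = 1) :
    (V.submatrix id (botIdx hk))ᵀ * V.submatrix id (botIdx hk) = 1 := by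
  rw [submatrix_transpose_mul_submatrix, hV, submatrix_one _ (botIdx_injective hk)]

theorem castLE_transpose_mul_botIdx (hV : Vᵀ * V = 1) :
    (V.submatrix id (Fin.castLE hk))ᵀ * V.submatrix id (botIdx hk) = 0 := by
  rw [submatrix_transpose_mul_submatrix, hV]
  ext i j
  simp [one_apply, castLE_ne_botIdx]

end Blocks

theorem submatrix_id_botIdx_eq_mul {m₁ m₂ k : ℕ} (hk₁ : k ≤ m₁) (hk₂ : k ≤ m₂)
    {S : Matrix (Fin m₁) (Fin m₂) ℝ}
    (hS : ∀ (i : Fin m₁) (j : Fin m₂), (i : ℕ) ≠ (j : ℕ) → S i j = 0) :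
    S.submatrix id (botIdx hk₂) =
      (1 : Matrix (Fin m₁) (Fin m₁) ℝ).submatrix id (botIdx hk₁) *
        S.submatrix (botIdx hk₁) (botIdx hk₂) := by
  ext i j
  simp only [mul_apply, submatrix_apply, id_eq, one_apply, ite_mul, one_mul, zero_mul]
  by_cases hi : ∃ l, i = botIdx hk₁ l
  · obtain ⟨l, rfl⟩ := hi
    simp [(botIdx_injective hk₁).eq_iff]
  · simp only [not_exists] at hi
    simp only [hi, if_false, Finset.sum_const_zero]
    refine hS _ _ fun h => ?_
    simp only [botIdx] at h
    exact hi ⟨i - k, by omega⟩ (Fin.ext (by simp only [botIdx]; omega))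

theorem frob_sub_mul_rightInverse_le {m₁ m₂ s k : ℕ} (hk₁ : k ≤ m₁) (hk₂ : k ≤ m₂)
    {B : Matrix (Fin m₁) (Fin m₂) ℝ} (Ω : Matrix (Fin m₂) (Fin s) ℝ)
    (E : Matrix (Fin m₁) (Fin s) ℝ) {U : Matrix (Fin m₁) (Fin m₁) ℝ}
    {V : Matrix (Fin m₂) (Fin m₂) ℝ} {S : Matrix (Fin m₁) (Fin m₂) ℝ}
    (hU : Uᵀ * U = 1) (hV : Vᵀ * V = 1)
    (hS : ∀ (i : Fin m₁) (j : Fin m₂), (i : ℕ) ≠ (j : ℕ) → S i j = 0) (hB : B = U * S * Vᵀ)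
    {F : Matrix (Fin s) (Fin k) ℝ} (hF : (V.submatrix id (Fin.castLE hk₂))ᵀ * Ω * F = 1) :
    frob (B - (B * Ω + E) * (F * (V.submatrix id (Fin.castLE hk₂))ᵀ)) ≤
      frob (E * F) + √(frob (S.submatrix (botIdx hk₁) (botIdx hk₂)) ^ 2 +
        frob (S.submatrix (botIdx hk₁) (botIdx hk₂) * ((V.submatrix id (botIdx hk₂))ᵀ * Ω) * F)
          ^ 2) := by
  set V₁ := V.submatrix id (Fin.castLE hk₂)
  set V₂ := V.submatrix id (botIdx hk₂)
  set S₁ := S.submatrix id (Fin.castLE hk₂)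
  set S₂ := S.submatrix (botIdx hk₁) (botIdx hk₂)
  set J := (1 : Matrix (Fin m₁) (Fin m₁) ℝ).submatrix id (botIdx hk₁)
  have hB' : B = U * (S₁ * V₁ᵀ + J * S₂ * V₂ᵀ) := by
    rw [hB, Matrix.mul_assoc, mul_eq_castLE_add_botIdx hk₂ S Vᵀ,
      submatrix_id_botIdx_eq_mul hk₁ hk₂ hS]
    rfl
  have hresidual : B - (B * Ω + E) * (F * V₁ᵀ) =
      U * (J * S₂ * V₂ᵀ - J * S₂ * (V₂ᵀ * Ω) * F * V₁ᵀ) - E * F * V₁ᵀ := by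
    have hF' : V₁ᵀ * (Ω * F) = 1 := by rw [← Matrix.mul_assoc, hF]
    have hBΩF : B * Ω * F = U * (S₁ + J * S₂ * (V₂ᵀ * Ω) * F) := by
      rw [hB']
      simp only [Matrix.mul_assoc, Matrix.add_mul, Matrix.mul_add, hF', Matrix.mul_one]
    calc B - (B * Ω + E) * (F * V₁ᵀ) = B - B * Ω * F * V₁ᵀ - E * F * V₁ᵀ := by
          simp only [Matrix.add_mul, Matrix.mul_assoc]; abel
      _ = _ := by
          rw [hBΩF, hB']
          simp only [Matrix.mul_add, Matrix.mul_sub, Matrix.add_mul, Matrix.mul_assoc]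
          abel
  have hJ : Jᵀ * J = 1 := botIdx_transpose_mul_botIdx hk₁ (by simp)
  calc _ = frob (U * (J * S₂ * V₂ᵀ - J * S₂ * (V₂ᵀ * Ω) * F * V₁ᵀ) - E * F * V₁ᵀ) := by
        rw [hresidual]
    _ ≤ frob (U * (J * S₂ * V₂ᵀ - J * S₂ * (V₂ᵀ * Ω) * F * V₁ᵀ)) + frob (E * F * V₁ᵀ) :=
        frob_sub_le _ _
    _ = _ := by
      rw [add_comm, frob_mul_transpose_of_transpose_mul_self (castLE_transpose_mul_castLE hk₂ hV),
        frob_mul_of_transpose_mul_self hU, ← Real.sqrt_sq (frob_nonneg (_ - _)),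
        frob_mul_transpose_sub_mul_transpose_sq (castLE_transpose_mul_castLE hk₂ hV)
          (botIdx_transpose_mul_botIdx hk₂ hV) (castLE_transpose_mul_botIdx hk₂ hV)]
      simp only [Matrix.mul_assoc, frob_mul_of_transpose_mul_self hJ]

theorem stmt2_general {m1 m2 s r k : ℕ} (hk1 : k ≤ m1) (hk2 : k ≤ m2)
    (B : Matrix (Fin m1) (Fin m2) ℝ) (Ω : Matrix (Fin m2) (Fin s) ℝ)
    (E1 : Matrix (Fin m1) (Fin s) ℝ)
    (U : Matrix (Fin m1) (Fin m1) ℝ) (V : Matrix (Fin m2) (Fin m2) ℝ)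
    (Sg : Matrix (Fin m1) (Fin m2) ℝ)
    (hU : Uᵀ * U = 1)
    (hV : Vᵀ * V = 1)
    (hSg : ∀ (i : Fin m1) (j : Fin m2), (i : ℕ) ≠ (j : ℕ) → Sg i j = 0)
    (hSVD : B = U * Sg * Vᵀ)
    (hrank : ((V.submatrix id (Fin.castLE hk2))ᵀ * Ω).rank = k)
    (Q : Matrix (Fin m1) (Fin r) ℝ) (hQ : Qᵀ * Q = 1)
    (hQspan : colSpan Q = colSpan (B * Ω + E1))
    (T : Matrix (Fin r) (Fin m2) ℝ)
    (hT : IsBestRankApprox k (Qᵀ * B) T) :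
    frob (B - Q * T) ≤
      frob (E1 * pinvR ((V.submatrix id (Fin.castLE hk2))ᵀ * Ω))
        + Real.sqrt
            ((frob (Sg.submatrix (botIdx hk1) (botIdx hk2))) ^ 2
              + (frob (Sg.submatrix (botIdx hk1) (botIdx hk2)
                  * ((V.submatrix id (botIdx hk2))ᵀ * Ω)
                  * pinvR ((V.submatrix id (Fin.castLE hk2))ᵀ * Ω))) ^ 2) := by
  set V₁ := V.submatrix id (Fin.castLE hk2)
  set Z := (B * Ω + E1) * (pinvR (V₁ᵀ * Ω) * V₁ᵀ)
  have hZ : Q * (Qᵀ * Z) = Z :=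
    mul_transpose_mul_of_colSpan_le hQ (hQspan ▸ colSpan_mul_le _ _)
  have hZrank : (Qᵀ * Z).rank ≤ k :=
    calc (Qᵀ * Z).rank ≤ (pinvR (V₁ᵀ * Ω) * V₁ᵀ).rank :=
          (rank_mul_le_right _ _).trans (rank_mul_le_right _ _)
      _ ≤ k := (rank_mul_le_right _ _).trans (by simpa using rank_le_card_height V₁ᵀ)
  calc frob (B - Q * T) ≤ frob (B - Q * (Qᵀ * Z)) := hT.frob_sub_mul_le hQ hZrank
    _ = frob (B - Z) := by rw [hZ]
    _ ≤ _ := frob_sub_mul_rightInverse_le hk1 hk2 Ω E1 hU hV hSg hSVD (mul_pinvR_of_rank_eq hrank)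

theorem stmt2 {m1 m2 s r k : ℕ} (hk1 : k ≤ m1) (hk2 : k ≤ m2)
    (B : Matrix (Fin m1) (Fin m2) ℝ) (Ω : Matrix (Fin m2) (Fin s) ℝ)
    (E1 : Matrix (Fin m1) (Fin s) ℝ)
    (U : Matrix (Fin m1) (Fin m1) ℝ) (V : Matrix (Fin m2) (Fin m2) ℝ)
    (Sg : Matrix (Fin m1) (Fin m2) ℝ)
    (hU : Uᵀ * U = 1) (hU' : U * Uᵀ = 1)
    (hV : Vᵀ * V = 1) (hV' : V * Vᵀ = 1)
    (hSg : ∀ (i : Fin m1) (j : Fin m2), (i : ℕ) ≠ (j : ℕ) → Sg i j = 0)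
    (hSVD : B = U * Sg * Vᵀ)
    (hrank : ((V.submatrix id (Fin.castLE hk2))ᵀ * Ω).rank = k)
    (Q : Matrix (Fin m1) (Fin r) ℝ) (hQ : Qᵀ * Q = 1)
    (hQspan : colSpan Q = colSpan (B * Ω + E1))
    (T : Matrix (Fin r) (Fin m2) ℝ)
    (hT : IsBestRankApprox k (Qᵀ * B) T) :
    frob (B - Q * T) ≤
      frob (E1 * pinvR ((V.submatrix id (Fin.castLE hk2))ᵀ * Ω))
        + Real.sqrt
            ((frob (Sg.submatrix (botIdx hk1) (botIdx hk2))) ^ 2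
              + (frob (Sg.submatrix (botIdx hk1) (botIdx hk2)
                  * ((V.submatrix id (botIdx hk2))ᵀ * Ω)
                  * pinvR ((V.submatrix id (Fin.castLE hk2))ᵀ * Ω))) ^ 2) :=
  stmt2_general hk1 hk2 B Ω E1 U V Sg hU hV hSg hSVD hrank Q hQ hQspan T hT
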